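/- For the classical Huber loss case φ(t) = t² (so dφ'(θ) = 2 dθ), one has for all x, y ∈ ℝ and a > 0: ∫_ℝ S^H_{1/2,a,a,θ}(x,y) dθ = (1/2)·h_a(x−y), where S^H_{1/2,a,a,θ}(x,y) = (1/2)min(θ−y, a) if y ≤ θ < x, (1/2)min(y−θ, a) if x ≤ θ < y, and 0 otherwise, and h_a is classical Huber loss. -/
import Mathlib


open Set MeasureTheory

/-- Elementary scoring function `S^H_{α,a,b,θ}` for the Huber functional. -/
noncomputable def elemScore (α a b θ x y : ℝ) : ℝ :=
  if y ≤ θ ∧ θ < x then (1 - α) * min (θ - y) b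
  else if x ≤ θ ∧ θ < y then α * min (y - θ) a
  else 0

/-- Classical Huber loss with parameter `a`. -/
noncomputable def huber (a u : ℝ) : ℝ := if |u| ≤ a then u ^ 2 / 2 else a * |u| - a ^ 2 / 2

lemma int_min (a u : ℝ) (ha : 0 < a) (hu : 0 ≤ u) :
    ∫ t in (0:ℝ)..u, min t a = huber a u := by
  rcases le_or_gt u a with h | h
  · have : ∫ t in (0:ℝ)..u, min t a = ∫ t in (0:ℝ)..u, t := by
      apply intervalIntegral.integral_congr
      intro t ht
      rw [uIcc_of_le hu] at ht
      exact min_eq_left (ht.2.trans h)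
    rw [this, integral_id, huber, if_pos (by rw [abs_of_nonneg hu]; exact h)]
    ring
  · have h1 : ∫ t in (0:ℝ)..a, min t a = ∫ t in (0:ℝ)..a, t := by
      apply intervalIntegral.integral_congr
      intro t ht
      rw [uIcc_of_le ha.le] at ht
      exact min_eq_left ht.2
    have h2 : ∫ t in a..u, min t a = ∫ t in a..u, a := by
      apply intervalIntegral.integral_congr
      intro t ht
      rw [uIcc_of_le h.le] at ht
      exact min_eq_right ht.1
    have hsplit : ∫ t in (0:ℝ)..u, min t a =
        (∫ t in (0:ℝ)..a, min t a) + ∫ t in a..u, min t a := by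
      rw [intervalIntegral.integral_add_adjacent_intervals]
      · exact (continuous_id.min continuous_const).intervalIntegrable _ _
      · exact (continuous_id.min continuous_const).intervalIntegrable _ _
    rw [hsplit, h1, h2, integral_id, intervalIntegral.integral_const,
      huber, if_neg (by rw [abs_of_nonneg hu]; linarith), abs_of_nonneg hu, smul_eq_mul]
    ring

lemma key (a p q : ℝ) (ha : 0 < a) (hpq : p ≤ q) :
    ∫ θ, (Ico p q).indicator (fun θ => min (θ - p) a) θ = huber a (q - p) := by
  rw [integral_indicator measurableSet_Ico, integral_Ico_eq_integral_Ioo, ← integral_Ioc_eq_integral_Ioo,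
    ← intervalIntegral.integral_of_le hpq,
    intervalIntegral.integral_comp_sub_right (fun t => min t a) p, sub_self]
  exact int_min a (q - p) ha (by linarith)

/-- For the classical case, `∫_ℝ S^H_{1/2,a,a,θ}(x,y) dθ = (1/2)·h_a(x−y)`. -/
theorem stmt16 (a x y : ℝ) (ha : 0 < a) :
    ∫ θ, elemScore (1 / 2) a a θ x y = (1 / 2) * huber a (x - y) := by
  rcases le_total y x with h | h
  · have he : (fun θ => elemScore (1 / 2) a a θ x y) =
        fun θ => (1/2 : ℝ) * (Ico y x).indicator (fun θ => min (θ - y) a) θ := by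
      funext θ
      have h2f : ¬(x ≤ θ ∧ θ < y) := fun ⟨hl, hr⟩ => absurd (hr.trans_le (h.trans hl)) (lt_irrefl θ)
      simp only [elemScore, indicator, mem_Ico, if_neg h2f]
      split_ifs with h1 <;> ring
    rw [he, integral_const_mul, key a y x ha h]
  · have he : (fun θ => elemScore (1 / 2) a a θ x y) =
        fun θ => (1/2 : ℝ) * (Ico x y).indicator (fun θ => min (y - θ) a) θ := by
      funext θ
      have h1f : ¬(y ≤ θ ∧ θ < x) := fun ⟨hl, hr⟩ => absurd (hr.trans_le (h.trans hl)) (lt_irrefl θ)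
      simp only [elemScore, indicator, mem_Ico, if_neg h1f]
      split_ifs with h2 <;> ring
    rw [he, integral_const_mul]
    have : ∫ θ, (Ico x y).indicator (fun θ => min (y - θ) a) θ = huber a (y - x) := by
      rw [integral_indicator measurableSet_Ico, integral_Ico_eq_integral_Ioo, ← integral_Ioc_eq_integral_Ioo,
        ← intervalIntegral.integral_of_le h,
        intervalIntegral.integral_comp_sub_left (fun t => min t a) y, sub_self]
      exact int_min a (y - x) ha (by linarith)
    rw [this]
    have habs : |x - y| = |y - x| := abs_sub_comm x y
    simp only [huber, habs]
    rw [show (x-y)^2 = (y-x)^2 by ring]
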